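/- Let n ≥ 2, let ρ₁, …, ρₙ ∈ (0,1) be real, and let t ∈ (−1,1) be real. Then the (n−1)-fold iterated improper integral ∫₀¹⋯∫₀¹ (∏_{i=1}^{n−1} z_i^{ρ_i−1}(1−z_i)^{−ρ_i}) · (1 − t·z₁⋯z_{n−1})^{−ρₙ} dz₁⋯dz_{n−1} converges and equals (∏_{i=1}^{n−1} Γ(ρ_i)Γ(1−ρ_i)) · ₙF_{n−1}(ρ₁,…,ρₙ; 1,…,1; t), where ₙF_{n−1}(ρ₁,…,ρₙ;1,…,1;t) = Σ_{k≥0} (ρ₁)_k⋯(ρₙ)_k/(k!)ⁿ · t^k. (This is the Euler-integral formula underlying the generalized Euler integral presentation of the mirror periods.) -/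

import Mathlib

/-!
Expand `(1 - t z₁⋯z_{n-1})^{-ρₙ}` in its binomial series `∑ₖ (ρₙ)ₖ/k! · tᵏ (z₁⋯z_{n-1})ᵏ`.
Each term is a product over the coordinates, and the `i`-th factor integrates to the Beta value
`B(ρᵢ + k, 1 - ρᵢ) = (ρᵢ)ₖ/k! · Γ(ρᵢ)Γ(1 - ρᵢ)`. Since `(ρᵢ)ₖ ≤ k!`, the integrals of the
absolute values of the terms are dominated by the binomial series at `|t|`, which converges
absolutely; this justifies integrating termwise and gives integrability at the same time.
-/

open MeasureTheory Polynomial Set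

theorem Ring.multichoose_eq_ascPochhammer_div_factorial {K : Type*} [Field K] [CharZero K]
    (b : K) (k : ℕ) :
    Ring.multichoose b k = (ascPochhammer K k).eval b / k.factorial := by
  rw [eq_div_iff (Nat.cast_ne_zero.2 k.factorial_ne_zero), mul_comm, ← nsmul_eq_mul,
    Ring.factorial_nsmul_multichoose_eq_ascPochhammer, ascPochhammer_smeval_eq_eval]

theorem ascPochhammer_eval_le_of_le {a b : ℝ} (ha : 0 < a) (hab : a ≤ b) (k : ℕ) :
    (ascPochhammer ℝ k).eval a ≤ (ascPochhammer ℝ k).eval b := by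
  induction k with
  | zero => simp
  | succ k ih =>
    simp only [ascPochhammer_succ_eval]
    exact mul_le_mul ih (by linarith) (by positivity) ((ascPochhammer_pos _ _ ha).le.trans ih)

theorem Ring.multichoose_pos {a : ℝ} (ha : 0 < a) (k : ℕ) : 0 < Ring.multichoose a k := by
  rw [Ring.multichoose_eq_ascPochhammer_div_factorial]
  exact div_pos (ascPochhammer_pos k a ha) (by positivity)

theorem Ring.multichoose_le_one {a : ℝ} (ha : 0 < a) (ha1 : a ≤ 1) (k : ℕ) :
    Ring.multichoose a k ≤ 1 := by
  rw [Ring.multichoose_eq_ascPochhammer_div_factorial, div_le_one (by positivity),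
    ← ascPochhammer_eval_one]
  exact ascPochhammer_eval_le_of_le ha ha1 k

theorem Finset.prod_ascPochhammer_eval_div_factorial_pow {ι : Type*} [Fintype ι] (a : ι → ℝ)
    (k : ℕ) :
    (∏ i, (ascPochhammer ℝ k).eval (a i)) / (k.factorial : ℝ) ^ Fintype.card ι =
      ∏ i, Ring.multichoose (a i) k := by
  simp only [Ring.multichoose_eq_ascPochhammer_div_factorial, Finset.prod_div_distrib,
    Finset.prod_const, Finset.card_univ]

theorem Fin.prod_univ_eq_prod_castLE_mul {M : Type*} [CommMonoid M] {n : ℕ} (hn : 1 ≤ n)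
    (g : Fin n → M) :
    ∏ i, g i = (∏ i : Fin (n - 1), g (Fin.castLE (Nat.sub_le n 1) i)) * g ⟨n - 1, by omega⟩ := by
  obtain ⟨m, rfl⟩ : ∃ m, n = m + 1 := ⟨n - 1, by omega⟩
  exact Fin.prod_univ_castSucc g

theorem Real.Gamma_add_nat {a : ℝ} (ha : 0 < a) (k : ℕ) :
    Real.Gamma (a + k) = (ascPochhammer ℝ k).eval a * Real.Gamma a := by
  induction k with
  | zero => simp
  | succ k ih =>
    rw [Nat.cast_succ, ← add_assoc, Real.Gamma_add_one (by positivity), ih,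
      ascPochhammer_succ_eval]
    ring

theorem Real.mem_eball_zero_one_of_abs_lt {u : ℝ} (hu : |u| < 1) : u ∈ Metric.eball (0 : ℝ) 1 := by
  simpa [enorm_eq_nnnorm, ← NNReal.coe_lt_one] using hu

theorem Real.hasSum_multichoose_mul_pow (b : ℝ) {u : ℝ} (hu : |u| < 1) :
    HasSum (fun k => Ring.multichoose b k * u ^ k) ((1 - u) ^ (-b)) := by
  have h := (Real.one_div_one_sub_rpow_hasFPowerSeriesOnBall_zero b).hasSum
    (Real.mem_eball_zero_one_of_abs_lt hu)
  simp only [FormalMultilinearSeries.ofScalars_apply_eq, ← Ring.multichoose_eq, smul_eq_mul,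
    zero_add] at h
  rwa [Real.rpow_neg (by linarith [(abs_lt.1 hu).2]), inv_eq_one_div]

theorem Real.summable_norm_multichoose_mul_pow (b : ℝ) {u : ℝ} (hu : |u| < 1) :
    Summable (fun k => ‖Ring.multichoose b k * u ^ k‖) := by
  have h := FormalMultilinearSeries.summable_norm_apply _ <|
    Metric.eball_subset_eball (Real.one_div_one_sub_rpow_hasFPowerSeriesOnBall_zero b).r_le
      (Real.mem_eball_zero_one_of_abs_lt hu)
  simpa only [FormalMultilinearSeries.ofScalars_apply_eq, ← Ring.multichoose_eq, smul_eq_mul]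
    using h

theorem lintegral_rpow_mul_one_sub_rpow {α β : ℝ} (hα : 0 < α) (hβ : 0 < β) :
    ∫⁻ x in Ioo (0 : ℝ) 1, ENNReal.ofReal (x ^ (α - 1) * (1 - x) ^ (β - 1)) =
      ENNReal.ofReal (ProbabilityTheory.beta α β) := by
  have hB := ProbabilityTheory.beta_pos hα hβ
  have h := ProbabilityTheory.lintegral_betaPDF_eq_one hα hβ
  simp_rw [ProbabilityTheory.lintegral_betaPDF, mul_assoc,
    ENNReal.ofReal_mul (one_div_pos.2 hB).le] at h
  rw [lintegral_const_mul' _ _ ENNReal.ofReal_ne_top, mul_comm] at h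
  rw [ENNReal.eq_inv_of_mul_eq_one_left h, one_div, ENNReal.ofReal_inv_of_pos hB, inv_inv]

theorem integrableOn_rpow_mul_one_sub_rpow {α β : ℝ} (hα : 0 < α) (hβ : 0 < β) :
    IntegrableOn (fun x : ℝ => x ^ (α - 1) * (1 - x) ^ (β - 1)) (Ioo 0 1) := by
  refine ⟨by fun_prop, ?_⟩
  rw [HasFiniteIntegral, setLIntegral_congr_fun measurableSet_Ioo fun x hx => Real.enorm_of_nonneg
    (mul_nonneg (Real.rpow_nonneg hx.1.le _) (Real.rpow_nonneg (sub_nonneg.2 hx.2.le) _)),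
    lintegral_rpow_mul_one_sub_rpow hα hβ]
  exact ENNReal.ofReal_lt_top

theorem integral_rpow_mul_one_sub_rpow {α β : ℝ} (hα : 0 < α) (hβ : 0 < β) :
    ∫ x in Ioo (0 : ℝ) 1, x ^ (α - 1) * (1 - x) ^ (β - 1) =
      Real.Gamma α * Real.Gamma β / Real.Gamma (α + β) := by
  rw [integral_eq_lintegral_of_nonneg_ae, lintegral_rpow_mul_one_sub_rpow hα hβ,
    ENNReal.toReal_ofReal (ProbabilityTheory.beta_pos hα hβ).le, ProbabilityTheory.beta]
  · filter_upwards [ae_restrict_mem measurableSet_Ioo] with x hx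
    exact mul_nonneg (Real.rpow_nonneg hx.1.le _) (Real.rpow_nonneg (sub_nonneg.2 hx.2.le) _)
  · exact (integrableOn_rpow_mul_one_sub_rpow hα hβ).aestronglyMeasurable

theorem eqOn_pow_mul_rpow_mul_one_sub_rpow_neg (σ : ℝ) (k : ℕ) :
    EqOn (fun x : ℝ => x ^ k * (x ^ (σ - 1) * (1 - x) ^ (-σ)))
      (fun x => x ^ (σ + k - 1) * (1 - x) ^ ((1 - σ) - 1)) (Ioo 0 1) := fun x hx => by
  simp only
  rw [show σ + k - 1 = (σ - 1) + k by ring, Real.rpow_add hx.1, Real.rpow_natCast,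
    show 1 - σ - 1 = -σ by ring]
  ring

theorem integrableOn_pow_mul_rpow_mul_one_sub_rpow_neg {σ : ℝ} (hσ : σ ∈ Ioo 0 1) (k : ℕ) :
    IntegrableOn (fun x : ℝ => x ^ k * (x ^ (σ - 1) * (1 - x) ^ (-σ))) (Ioo 0 1) :=
  (integrableOn_rpow_mul_one_sub_rpow (by linarith [hσ.1]) (sub_pos.2 hσ.2)).congr_fun
    (eqOn_pow_mul_rpow_mul_one_sub_rpow_neg σ k).symm measurableSet_Ioo

theorem integral_pow_mul_rpow_mul_one_sub_rpow_neg {σ : ℝ} (hσ : σ ∈ Ioo 0 1) (k : ℕ) :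
    ∫ x in Ioo (0 : ℝ) 1, x ^ k * (x ^ (σ - 1) * (1 - x) ^ (-σ)) =
      Ring.multichoose σ k * (Real.Gamma σ * Real.Gamma (1 - σ)) := by
  rw [setIntegral_congr_fun measurableSet_Ioo (eqOn_pow_mul_rpow_mul_one_sub_rpow_neg σ k),
    integral_rpow_mul_one_sub_rpow (by linarith [hσ.1]) (sub_pos.2 hσ.2),
    show σ + k + (1 - σ) = k + 1 by ring, Real.Gamma_nat_eq_factorial, Real.Gamma_add_nat hσ.1,
    Ring.multichoose_eq_ascPochhammer_div_factorial]
  ring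

theorem integrableOn_univ_pi_prod {ι : Type*} [Fintype ι] {s : ι → Set ℝ} {g : ι → ℝ → ℝ}
    (hg : ∀ i, IntegrableOn (g i) (s i)) :
    IntegrableOn (fun z : ι → ℝ => ∏ i, g i (z i)) (univ.pi s) := by
  rw [IntegrableOn, volume_pi, Measure.restrict_pi_pi]
  exact Integrable.fintype_prod hg

theorem setIntegral_univ_pi_prod {ι : Type*} [Fintype ι] (s : ι → Set ℝ) (g : ι → ℝ → ℝ) :
    ∫ z in univ.pi s, ∏ i, g i (z i) = ∏ i, ∫ x in s i, g i x := by
  rw [volume_pi, Measure.restrict_pi_pi, integral_fintype_prod_eq_prod]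

theorem integrable_of_hasSum_of_summable_integral_norm {α E ι : Type*} [MeasurableSpace α]
    {μ : Measure α} [NormedAddCommGroup E] [Countable ι] {F : ι → α → E} {f : α → E}
    (hF : ∀ i, Integrable (F i) μ) (hFs : Summable fun i => ∫ x, ‖F i x‖ ∂μ)
    (hf : ∀ᵐ x ∂μ, HasSum (F · x) (f x)) : Integrable f μ := by
  refine ⟨aestronglyMeasurable_of_tendsto_ae (SummationFilter.unconditional ι).filter
    (f := fun s x => ∑ i ∈ s, F i x)
    (fun s => Finset.aestronglyMeasurable_fun_sum s fun i _ => (hF i).1) hf, ?_⟩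
  calc ∫⁻ x, ‖f x‖ₑ ∂μ ≤ ∫⁻ x, ∑' i, ‖F i x‖ₑ ∂μ :=
        lintegral_mono_ae (hf.mono fun x hx => hx.tsum_eq ▸ enorm_tsum_le_tsum_enorm)
    _ = ∑' i, ENNReal.ofReal (∫ x, ‖F i x‖ ∂μ) := by
        rw [lintegral_tsum fun i => (hF i).1.enorm]
        exact tsum_congr fun i => (ofReal_integral_norm_eq_lintegral_enorm (hF i)).symm
    _ < ⊤ := by
        rw [← ENNReal.ofReal_tsum_of_nonneg (fun i => integral_nonneg fun x => norm_nonneg _) hFs]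
        exact ENNReal.ofReal_lt_top

section Euler

variable {ι : Type*} [Fintype ι]

noncomputable def eulerIntegrand (σ : ι → ℝ) (b t : ℝ) (z : ι → ℝ) : ℝ :=
  (∏ i, z i ^ (σ i - 1) * (1 - z i) ^ (-σ i)) * (1 - t * ∏ i, z i) ^ (-b)

noncomputable def eulerTerm (σ : ι → ℝ) (b t : ℝ) (k : ℕ) (z : ι → ℝ) : ℝ :=
  (Ring.multichoose b k * t ^ k) * ∏ i, z i ^ k * (z i ^ (σ i - 1) * (1 - z i) ^ (-σ i))

variable {σ : ι → ℝ} (b : ℝ)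

theorem hasSum_eulerTerm {t : ℝ} (ht : |t| < 1) {z : ι → ℝ}
    (hz : z ∈ univ.pi fun _ => Ioo (0 : ℝ) 1) :
    HasSum (fun k => eulerTerm σ b t k z) (eulerIntegrand σ b t z) := by
  have hz' : ∀ i, z i ∈ Ioo (0 : ℝ) 1 := fun i => hz i (mem_univ i)
  have hprod : |t * ∏ i, z i| < 1 := by
    rw [abs_mul, abs_of_pos (Finset.prod_pos fun i _ => (hz' i).1)]
    exact (mul_le_of_le_one_right (abs_nonneg t)
      (Finset.prod_le_one (fun i _ => (hz' i).1.le) fun i _ => (hz' i).2.le)).trans_lt ht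
  refine ((Real.hasSum_multichoose_mul_pow b hprod).mul_left
    (∏ i, z i ^ (σ i - 1) * (1 - z i) ^ (-σ i))).congr_fun fun k => ?_
  simp only [eulerTerm, Finset.prod_mul_distrib, Finset.prod_pow]
  ring

theorem integrableOn_eulerTerm (hσ : ∀ i, σ i ∈ Ioo 0 1) (t : ℝ) (k : ℕ) :
    IntegrableOn (eulerTerm σ b t k) (univ.pi fun _ => Ioo (0 : ℝ) 1) :=
  (integrableOn_univ_pi_prod fun i =>
    integrableOn_pow_mul_rpow_mul_one_sub_rpow_neg (hσ i) k).const_mul _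

theorem setIntegral_prod_pow_mul_rpow_mul_one_sub_rpow_neg (hσ : ∀ i, σ i ∈ Ioo 0 1)
    (k : ℕ) :
    ∫ z in univ.pi fun _ => Ioo (0 : ℝ) 1, ∏ i, z i ^ k * (z i ^ (σ i - 1) * (1 - z i) ^ (-σ i)) =
      ∏ i, Ring.multichoose (σ i) k * (Real.Gamma (σ i) * Real.Gamma (1 - σ i)) := by
  rw [setIntegral_univ_pi_prod _ fun i x => x ^ k * (x ^ (σ i - 1) * (1 - x) ^ (-σ i))]
  exact Finset.prod_congr rfl fun i _ => integral_pow_mul_rpow_mul_one_sub_rpow_neg (hσ i) k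

theorem setIntegral_eulerTerm (hσ : ∀ i, σ i ∈ Ioo 0 1) (t : ℝ) (k : ℕ) :
    ∫ z in univ.pi fun _ => Ioo (0 : ℝ) 1, eulerTerm σ b t k z =
      Ring.multichoose b k * t ^ k *
        ∏ i, Ring.multichoose (σ i) k * (Real.Gamma (σ i) * Real.Gamma (1 - σ i)) := by
  rw [← setIntegral_prod_pow_mul_rpow_mul_one_sub_rpow_neg hσ, ← integral_const_mul]
  rfl

theorem setIntegral_norm_eulerTerm (hσ : ∀ i, σ i ∈ Ioo 0 1) (t : ℝ) (k : ℕ) :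
    ∫ z in univ.pi fun _ => Ioo (0 : ℝ) 1, ‖eulerTerm σ b t k z‖ =
      ‖Ring.multichoose b k * t ^ k‖ *
        ∏ i, Ring.multichoose (σ i) k * (Real.Gamma (σ i) * Real.Gamma (1 - σ i)) := by
  have hnonneg : ∀ z ∈ univ.pi fun _ => Ioo (0 : ℝ) 1,
      0 ≤ ∏ i, z i ^ k * (z i ^ (σ i - 1) * (1 - z i) ^ (-σ i)) := fun z hz =>
    Finset.prod_nonneg fun i _ => by
      obtain ⟨h0, h1⟩ := hz i (mem_univ i)
      have : 0 < 1 - z i := sub_pos.2 h1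
      positivity
  rw [setIntegral_congr_fun (MeasurableSet.univ_pi fun _ => measurableSet_Ioo) fun z hz => by
      rw [eulerTerm, norm_mul, Real.norm_of_nonneg (hnonneg z hz)],
    integral_const_mul, setIntegral_prod_pow_mul_rpow_mul_one_sub_rpow_neg hσ]

theorem summable_setIntegral_norm_eulerTerm (hσ : ∀ i, σ i ∈ Ioo 0 1) {t : ℝ} (ht : |t| < 1) :
    Summable fun k => ∫ z in univ.pi fun _ => Ioo (0 : ℝ) 1, ‖eulerTerm σ b t k z‖ := by
  have hΓ : ∀ i, 0 < Real.Gamma (σ i) * Real.Gamma (1 - σ i) := fun i =>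
    mul_pos (Real.Gamma_pos_of_pos (hσ i).1) (Real.Gamma_pos_of_pos (sub_pos.2 (hσ i).2))
  simp only [setIntegral_norm_eulerTerm b hσ]
  refine ((Real.summable_norm_multichoose_mul_pow b ht).mul_right
    (∏ i, Real.Gamma (σ i) * Real.Gamma (1 - σ i))).of_nonneg_of_le (fun k => ?_) fun k => ?_
  · exact mul_nonneg (norm_nonneg _) (Finset.prod_nonneg fun i _ =>
      mul_nonneg (Ring.multichoose_pos (hσ i).1 k).le (hΓ i).le)
  · refine mul_le_mul_of_nonneg_left (Finset.prod_le_prod (fun i _ =>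
      mul_nonneg (Ring.multichoose_pos (hσ i).1 k).le (hΓ i).le) fun i _ => ?_) (norm_nonneg _)
    exact mul_le_of_le_one_left (hΓ i).le (Ring.multichoose_le_one (hσ i).1 (hσ i).2.le k)

theorem integrableOn_eulerIntegrand (hσ : ∀ i, σ i ∈ Ioo 0 1) {t : ℝ} (ht : |t| < 1) :
    IntegrableOn (eulerIntegrand σ b t) (univ.pi fun _ => Ioo (0 : ℝ) 1) :=
  integrable_of_hasSum_of_summable_integral_norm (integrableOn_eulerTerm b hσ t)
    (summable_setIntegral_norm_eulerTerm b hσ ht)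
    (ae_restrict_of_forall_mem (MeasurableSet.univ_pi fun _ => measurableSet_Ioo)
      fun _ hz => hasSum_eulerTerm b ht hz)

theorem setIntegral_eulerIntegrand (hσ : ∀ i, σ i ∈ Ioo 0 1) {t : ℝ} (ht : |t| < 1) :
    ∫ z in univ.pi fun _ => Ioo (0 : ℝ) 1, eulerIntegrand σ b t z =
      (∏ i, Real.Gamma (σ i) * Real.Gamma (1 - σ i)) *
        ∑' k, (∏ i, Ring.multichoose (σ i) k) * Ring.multichoose b k * t ^ k := by
  rw [setIntegral_congr_fun (MeasurableSet.univ_pi fun _ => measurableSet_Ioo)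
      fun z hz => (hasSum_eulerTerm b ht hz).tsum_eq.symm,
    ← integral_tsum_of_summable_integral_norm (integrableOn_eulerTerm b hσ t)
      (summable_setIntegral_norm_eulerTerm b hσ ht), ← tsum_mul_left]
  refine tsum_congr fun k => ?_
  rw [setIntegral_eulerTerm b hσ, Finset.prod_mul_distrib]
  ring

end Euler

/-- The Euler-integral formula: for `ρ₁, …, ρₙ ∈ (0,1)` and `t ∈ (-1,1)`, the
`(n-1)`-fold integral of `(∏ᵢ zᵢ^{ρᵢ-1}(1-zᵢ)^{-ρᵢ})·(1 - t·z₁⋯z_{n-1})^{-ρₙ}` over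
the open unit cube converges and equals
`(∏_{i=1}^{n-1} Γ(ρᵢ)Γ(1-ρᵢ)) · ₙF_{n-1}(ρ₁,…,ρₙ; 1,…,1; t)`. -/
theorem euler_integral_formula (n : ℕ) (hn : 2 ≤ n) (ρ : Fin n → ℝ)
    (hρ : ∀ i, ρ i ∈ Set.Ioo (0 : ℝ) 1) (t : ℝ) (ht : t ∈ Set.Ioo (-1 : ℝ) 1) :
    IntegrableOn
      (fun z : Fin (n - 1) → ℝ =>
        (∏ i : Fin (n - 1), (z i) ^ (ρ (Fin.castLE (Nat.sub_le n 1) i) - 1) *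
          (1 - z i) ^ (-(ρ (Fin.castLE (Nat.sub_le n 1) i)))) *
        (1 - t * ∏ i : Fin (n - 1), z i) ^ (-(ρ ⟨n - 1, by omega⟩)))
      (Set.univ.pi fun _ : Fin (n - 1) => Set.Ioo (0 : ℝ) 1) volume ∧
    ∫ z : Fin (n - 1) → ℝ in Set.univ.pi fun _ : Fin (n - 1) => Set.Ioo (0 : ℝ) 1,
        (∏ i : Fin (n - 1), (z i) ^ (ρ (Fin.castLE (Nat.sub_le n 1) i) - 1) *
          (1 - z i) ^ (-(ρ (Fin.castLE (Nat.sub_le n 1) i)))) *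
        (1 - t * ∏ i : Fin (n - 1), z i) ^ (-(ρ ⟨n - 1, by omega⟩)) =
      (∏ i : Fin (n - 1), Real.Gamma (ρ (Fin.castLE (Nat.sub_le n 1) i)) *
          Real.Gamma (1 - ρ (Fin.castLE (Nat.sub_le n 1) i))) *
        ∑' k : ℕ, (∏ i : Fin n, (ascPochhammer ℝ k).eval (ρ i)) /
          ((k.factorial : ℝ)) ^ n * t ^ k := by
  have ht' : |t| < 1 := abs_lt.2 ht
  refine ⟨integrableOn_eulerIntegrand _ (fun _ => hρ _) ht',
    (setIntegral_eulerIntegrand _ (fun _ => hρ _) ht').trans ?_⟩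
  congr 1
  refine tsum_congr fun k => ?_
  have hprod := Finset.prod_ascPochhammer_eval_div_factorial_pow ρ k
  rw [Fintype.card_fin] at hprod
  rw [hprod, Fin.prod_univ_eq_prod_castLE_mul (n := n) (by omega)]
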